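/- Let U be an n × n Haar distributed unitary random matrix and fix a positive integer k. Define M_k^n = E(|U_{11}|² |U_{22}|² ⋯ |U_{kk}|²). Then (n!/(n−k)!) · M_k^n → 1 as n → ∞; equivalently, n^k · E(|U_{11}|² ⋯ |U_{kk}|²) → 1. -/

import Mathlib

open MeasureTheory ProbabilityTheory Filter

noncomputable instance Matrix.measurableSpace {m n α : Type*} [MeasurableSpace α] :
    MeasurableSpace (Matrix m n α) :=
  (inferInstance : MeasurableSpace (m → n → α))

/-!
Write `q r c = |U r c|²` and `N` for the matrix size. Since the columns of `U` are unit vectors,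
for fixed columns `c j` the products `∏ j, q (i j) (c j)` over all row maps `i` sum to `1`.
Invariance under permutation matrices makes the expectation of such a product the same for all
`N! / (N - k)!` injective maps `i`; as `N! / (N - k)! ~ N ^ k`, it suffices that the
non-injective maps carry mass `O(1/N)`. For a pair `j₀ ≠ j₁`, the maps with `i j₀ = i j₁`
together contribute, after summing out the other rows, `∑ r, E[q r c₀ * q r c₁] ≤ 2 / (N + 1)`,
by the fourth moment `E[q r c ^ 2] = 2 / (N (N + 1))`. That moment is forced by
`∑ r s, E[q r c * q s c] = 1` once `E[q r c * q s c] = E[q r c ^ 2] / 2` for `r ≠ s`, which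
follows from invariance under Householder reflections mixing rows `r` and `s`.
-/

open Matrix Finset Function

namespace Matrix

instance borelSpace {m n α : Type*} [Countable m] [Countable n] [TopologicalSpace α]
    [MeasurableSpace α] [SecondCountableTopology α] [BorelSpace α] : BorelSpace (Matrix m n α) :=
  inferInstanceAs (BorelSpace (m → n → α))

section Unitary

open scoped ComplexOrder

variable {n 𝕜 : Type*} [Fintype n] [DecidableEq n] [RCLike 𝕜]

instance : CompactSpace (unitaryGroup n 𝕜) := by
  refine isCompact_iff_compactSpace.mp <| (isCompact_univ_pi fun _ =>
    isCompact_univ_pi fun _ => ProperSpace.isCompact_closedBall (0 : 𝕜) 1).of_isClosed_subset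
    (isClosed_unitary (R := Matrix n n 𝕜)) fun U hU i _ j _ => ?_
  simpa using entry_norm_bound_of_unitary hU i j

theorem sum_norm_sq_col_of_mem_unitaryGroup {U : Matrix n n 𝕜}
    (hU : U ∈ unitaryGroup n 𝕜) (j : n) : ∑ i, ‖U i j‖ ^ 2 = 1 := by
  have h := congr_fun (congr_fun (mem_unitaryGroup_iff'.mp hU) j) j
  simp only [star_eq_conjTranspose, mul_apply, conjTranspose_apply, RCLike.star_def,
    RCLike.conj_mul, one_apply_eq] at h
  exact_mod_cast h

theorem permMatrix_mem_unitaryGroup (σ : Equiv.Perm n) :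
    σ.permMatrix 𝕜 ∈ unitaryGroup n 𝕜 := by
  rw [mem_unitaryGroup_iff', star_eq_conjTranspose, conjTranspose_permMatrix, ← permMatrix_mul,
    mul_inv_cancel, permMatrix_one]

noncomputable def householder (v : n → 𝕜) : Matrix n n 𝕜 :=
  1 - (2 / (star v ⬝ᵥ v)) • vecMulVec v (star v)

theorem householder_mem_unitaryGroup {v : n → 𝕜} (hv : v ≠ 0) :
    householder v ∈ unitaryGroup n 𝕜 := by
  have hs : star v ⬝ᵥ v ≠ 0 := dotProduct_star_self_eq_zero.not.mpr hv
  have hsq : vecMulVec v (star v) * vecMulVec v (star v) =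
      (star v ⬝ᵥ v) • vecMulVec v (star v) := by
    rw [vecMulVec_mul_vecMulVec, vecMulVec_smul]
  have hself : star (householder v) = householder v := by
    simp [householder, star_eq_conjTranspose, conjTranspose_vecMulVec,
      ← star_dotProduct v v]
  have hc : 2 / (star v ⬝ᵥ v) * (2 / (star v ⬝ᵥ v)) * (star v ⬝ᵥ v) =
      2 * (2 / (star v ⬝ᵥ v)) := by
    field_simp
  rw [mem_unitaryGroup_iff', hself, householder]
  simp only [sub_mul, mul_sub, one_mul, mul_one, smul_mul_smul, hsq, smul_smul]
  linear_combination (norm := module) hc • vecMulVec v (star v)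

theorem householder_mul_apply (v : n → 𝕜) (U : Matrix n n 𝕜) (i j : n) :
    (householder v * U) i j = U i j - 2 / (star v ⬝ᵥ v) * (v i * ∑ k, star (v k) * U k j) := by
  simp [householder, sub_mul, vecMulVec_mul, vecMulVec_apply, vecMul, dotProduct]

theorem householder_single_add_single_mul_apply {r s : n} (hrs : r ≠ s) {ε : 𝕜} (hε : ‖ε‖ = 1)
    (U : Matrix n n 𝕜) (j : n) :
    (householder (Pi.single r 1 + Pi.single s (2 * star ε)) * U : Matrix n n 𝕜) r j =
      (3 * U r j - 4 * ε * U s j) / 5 := by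
  have hεε : ε * (starRingEnd 𝕜) ε = 1 := by simp [RCLike.mul_conj, hε]
  have h5 : 1 + 2 * ε * (2 * (starRingEnd 𝕜) ε) = 5 := by linear_combination 4 * hεε
  rw [householder_mul_apply]
  simp [dotProduct, Pi.single_apply, add_mul, mul_add, sum_add_distrib, hrs, hrs.symm, ite_mul,
    mul_ite, apply_ite (starRingEnd 𝕜), map_ofNat, h5]
  ring

end Unitary

end Matrix

section Combinatorics

variable {κ ι R : Type*} [Fintype κ] [DecidableEq κ] [Fintype ι] [DecidableEq ι]

theorem sum_prod_filter_apply_eq [CommSemiring R] (f : κ → ι → R) (hf : ∀ j, ∑ r, f j r = 1)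
    {j₀ j₁ : κ} (h : j₀ ≠ j₁) :
    ∑ i : κ → ι with i j₀ = i j₁, ∏ j, f j (i j) = ∑ r, f j₀ r * f j₁ r := by
  rw [← sum_fiberwise (g := fun i : κ → ι => i j₀)]
  refine sum_congr rfl fun r _ => ?_
  have hfiber : {i ∈ (univ.filter fun i : κ → ι => i j₀ = i j₁) | i j₀ = r} =
      Fintype.piFinset fun j => if j ∈ ({j₀, j₁} : Finset κ) then {r} else univ := by
    ext i
    simp only [mem_filter, mem_univ, true_and, Fintype.mem_piFinset, mem_insert,
      mem_singleton]
    constructor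
    · rintro ⟨h01, rfl⟩ j
      split_ifs with hj <;> grind
    · intro hi
      have h₀ := hi j₀
      have h₁ := hi j₁
      simp only [true_or, or_true, if_true, mem_singleton] at h₀ h₁
      exact ⟨h₀.trans h₁.symm, h₀⟩
  rw [hfiber, ← prod_univ_sum,
    prod_congr rfl fun j _ => apply_ite (fun t => ∑ s ∈ t, f j s) _ _ _]
  simp only [sum_singleton, hf, prod_ite_mem, univ_inter, prod_pair h]

theorem sum_filter_not_injective_le [AddCommMonoid R] [PartialOrder R] [IsOrderedAddMonoid R]
    {g : (κ → ι) → R} (hg : ∀ i, 0 ≤ g i) :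
    ∑ i : κ → ι with ¬Injective i, g i ≤
      ∑ p ∈ (univ : Finset κ).offDiag, ∑ i : κ → ι with i p.1 = i p.2, g i := by
  have hterm : ∀ (i : κ → ι) (p : κ × κ), 0 ≤ if i p.1 = i p.2 then g i else 0 := fun i p => by
    split_ifs <;> simp [hg]
  simp_rw [sum_filter]
  rw [sum_comm]
  refine sum_le_sum fun i _ => ?_
  by_cases hi : Injective i
  · simpa [hi] using sum_nonneg fun p _ => hterm i p
  · obtain ⟨a, b, hab, hne⟩ : ∃ a b, i a = i b ∧ a ≠ b := by
      simpa [Injective] using hi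
    simpa [hi, hab] using
      single_le_sum (fun p _ => hterm i p) (show (a, b) ∈ univ.offDiag by simpa using hne)

theorem card_filter_injective :
    #{i : κ → ι | Injective i} = (Fintype.card ι).descFactorial (Fintype.card κ) := by
  rw [← Fintype.card_subtype, Fintype.card_congr (Equiv.subtypeInjectiveEquivEmbedding κ ι),
    Fintype.card_embedding_eq]

end Combinatorics

namespace UnitaryHaar

variable {ι : Type*} [Fintype ι] [DecidableEq ι]

noncomputable def entrySq (U : unitaryGroup ι ℂ) (i j : ι) : ℝ :=
  ‖(U : Matrix ι ι ℂ) i j‖ ^ 2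

theorem entrySq_nonneg (U : unitaryGroup ι ℂ) (i j : ι) : 0 ≤ entrySq U i j :=
  sq_nonneg _

theorem sum_entrySq (U : unitaryGroup ι ℂ) (j : ι) : ∑ i, entrySq U i j = 1 :=
  sum_norm_sq_col_of_mem_unitaryGroup U.2 j

@[fun_prop]
theorem continuous_entrySq (i j : ι) : Continuous fun U : unitaryGroup ι ℂ => entrySq U i j :=
  (continuous_subtype_val.matrix_elem i j).norm.pow 2

theorem entrySq_permMatrix_mul (σ : Equiv.Perm ι) (U : unitaryGroup ι ℂ) (i j : ι) :
    entrySq (⟨σ.permMatrix ℂ, permMatrix_mem_unitaryGroup σ⟩ * U) i j = entrySq U (σ i) j := by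
  simp [entrySq, PEquiv.toMatrix_toPEquiv_mul]

variable (μ : Measure (unitaryGroup ι ℂ))

theorem integrable_of_continuous [IsFiniteMeasure μ] {f : unitaryGroup ι ℂ → ℝ}
    (hf : Continuous f) : Integrable f μ :=
  hf.integrable_of_hasCompactSupport (.of_compactSpace f)

noncomputable def entryMoment {κ : Type*} [Fintype κ] (i c : κ → ι) : ℝ :=
  ∫ U, ∏ j, entrySq U (i j) (c j) ∂μ

theorem entryMoment_nonneg {κ : Type*} [Fintype κ] (i c : κ → ι) : 0 ≤ entryMoment μ i c :=
  integral_nonneg fun U => prod_nonneg fun _ _ => entrySq_nonneg U _ _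

theorem sum_entryMoment [IsProbabilityMeasure μ] {κ : Type*} [Fintype κ] [DecidableEq κ]
    (c : κ → ι) : ∑ i : κ → ι, entryMoment μ i c = 1 := by
  have hpt : ∀ U, ∑ i : κ → ι, ∏ j, entrySq U (i j) (c j) = 1 := fun U => by
    simp [← Fintype.prod_sum (fun j r => entrySq U r (c j)), sum_entrySq]
  simp only [entryMoment]
  rw [← integral_finsetSum _ fun i _ => integrable_of_continuous μ (by fun_prop)]
  simp [hpt]

section Invariant

variable [μ.IsMulLeftInvariant]

local notation "N" => (Fintype.card ι : ℝ)

theorem integral_entrySq_sq_eq (r s c : ι) :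
    ∫ U, entrySq U r c ^ 2 ∂μ = ∫ U, entrySq U s c ^ 2 ∂μ := by
  simpa only [entrySq_permMatrix_mul, Equiv.swap_apply_left] using
    integral_mul_left_eq_self (fun U => entrySq U s c ^ 2)
      ⟨(Equiv.swap s r).permMatrix ℂ, permMatrix_mem_unitaryGroup _⟩

theorem entryMoment_comp_perm {κ : Type*} [Fintype κ] (σ : Equiv.Perm ι) (i c : κ → ι) :
    entryMoment μ (σ ∘ i) c = entryMoment μ i c := by
  simpa only [entryMoment, Function.comp_apply, entrySq_permMatrix_mul] using
    integral_mul_left_eq_self (fun U => ∏ j, entrySq U (i j) (c j))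
      ⟨σ.permMatrix ℂ, permMatrix_mem_unitaryGroup σ⟩

theorem entryMoment_eq_of_injective {κ : Type*} [Fintype κ] {i i' : κ → ι} (hi : Injective i)
    (hi' : Injective i') (c : κ → ι) : entryMoment μ i c = entryMoment μ i' c := by
  obtain ⟨σ, hσ⟩ := Equiv.Perm.exists_extending_pair i i' hi hi'
  rw [← entryMoment_comp_perm μ σ, show σ ∘ i = i' from funext hσ]

-- Summing over the fourth roots of unity `ε` cancels the cross terms `Re (ε a b̄)`.
theorem sum_phases_norm_sq_sq (a b : ℂ) :
    ∑ m : Fin 4, (‖(3 * a - 4 * ![1, Complex.I, -1, -Complex.I] m * b) / 5‖ ^ 2) ^ 2 =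
      (324 * (‖a‖ ^ 2) ^ 2 + 1024 * (‖b‖ ^ 2) ^ 2 + 2304 * (‖a‖ ^ 2 * ‖b‖ ^ 2)) / 625 := by
  simp only [Fin.sum_univ_four, Complex.sq_norm]
  simp [Complex.normSq_apply]
  ring

theorem integral_entrySq_mul_entrySq_of_ne [IsFiniteMeasure μ] {r s : ι} (hrs : r ≠ s) (c : ι) :
    ∫ U, entrySq U r c * entrySq U s c ∂μ = (∫ U, entrySq U r c ^ 2 ∂μ) / 2 := by
  set t := ∫ U, entrySq U r c ^ 2 ∂μ
  let ε : Fin 4 → ℂ := ![1, Complex.I, -1, -Complex.I]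
  have hε : ∀ m, ‖ε m‖ = 1 := by intro m; fin_cases m <;> simp [ε]
  let W : Fin 4 → unitaryGroup ι ℂ := fun m =>
    ⟨householder (Pi.single r 1 + Pi.single s (2 * star (ε m))),
      householder_mem_unitaryGroup fun h => by simpa [hrs] using congr_fun h r⟩
  have hW : ∀ m (U : unitaryGroup ι ℂ),
      entrySq (W m * U) r c = ‖(3 * (U : Matrix ι ι ℂ) r c - 4 * ε m * U s c) / 5‖ ^ 2 :=
    fun m U => congr_arg (‖·‖ ^ 2) (householder_single_add_single_mul_apply hrs (hε m) U c)
  have hsum : ∫ U, ∑ m, entrySq (W m * U) r c ^ 2 ∂μ = 4 * t := by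
    rw [integral_finsetSum _ fun m _ => integrable_of_continuous μ (by fun_prop)]
    simp [integral_mul_left_eq_self (fun U => entrySq U r c ^ 2), t]
  have hpt : ∀ U, ∑ m, entrySq (W m * U) r c ^ 2 = (324 * entrySq U r c ^ 2 +
      1024 * entrySq U s c ^ 2 + 2304 * (entrySq U r c * entrySq U s c)) / 625 := by
    intro U
    simp only [hW, ε]
    exact sum_phases_norm_sq_sq _ _
  rw [integral_congr_ae (ae_of_all _ hpt), integral_div, integral_add, integral_add,
    integral_const_mul, integral_const_mul, integral_const_mul, ← integral_entrySq_sq_eq μ r s c]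
    at hsum
  · linarith
  all_goals exact integrable_of_continuous μ (by fun_prop)

theorem integral_entrySq_sq [IsProbabilityMeasure μ] (r c : ι) :
    ∫ U, entrySq U r c ^ 2 ∂μ = 2 / (N * (N + 1)) := by
  set t := ∫ U, entrySq U r c ^ 2 ∂μ
  have hmoment : ∀ s s',
      ∫ U, entrySq U s c * entrySq U s' c ∂μ = t / 2 + if s = s' then t / 2 else 0 := by
    intro s s'
    split_ifs with h
    · simp_rw [h, ← sq, integral_entrySq_sq_eq μ s' r c]; ring
    · rw [integral_entrySq_mul_entrySq_of_ne μ h, integral_entrySq_sq_eq μ s r c]; ring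
  have htotal : ∑ s, ∑ s', ∫ U, entrySq U s c * entrySq U s' c ∂μ = 1 := by
    have hpt : ∀ U, ∑ s, ∑ s', entrySq U s c * entrySq U s' c = 1 := fun U => by
      rw [← sum_mul_sum, sum_entrySq, one_mul]
    have hint : ∫ U, ∑ s, ∑ s', entrySq U s c * entrySq U s' c ∂μ = 1 := by simp [hpt]
    rwa [integral_finsetSum _ fun s _ => integrable_of_continuous μ (by fun_prop),
      sum_congr rfl fun s _ =>
        integral_finsetSum _ fun s' _ => integrable_of_continuous μ (by fun_prop)] at hint
  simp only [hmoment, sum_add_distrib, sum_ite_eq, mem_univ, if_true, sum_const, card_univ,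
    nsmul_eq_mul] at htotal
  have hN : 0 < N := Nat.cast_pos.mpr (Fintype.card_pos_iff.mpr ⟨r⟩)
  field_simp
  linear_combination 2 * htotal

theorem integral_entrySq_mul_entrySq_le [IsProbabilityMeasure μ] (r c c' : ι) :
    ∫ U, entrySq U r c * entrySq U r c' ∂μ ≤ 2 / (N * (N + 1)) :=
  calc ∫ U, entrySq U r c * entrySq U r c' ∂μ
      ≤ ∫ U, (entrySq U r c ^ 2 + entrySq U r c' ^ 2) / 2 ∂μ :=
        integral_mono (integrable_of_continuous μ (by fun_prop))
          (integrable_of_continuous μ (by fun_prop))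
          fun U => by nlinarith [sq_nonneg (entrySq U r c - entrySq U r c')]
    _ = 2 / (N * (N + 1)) := by
        rw [integral_div, integral_add (integrable_of_continuous μ (by fun_prop))
          (integrable_of_continuous μ (by fun_prop)), integral_entrySq_sq, integral_entrySq_sq]
        ring

variable [IsProbabilityMeasure μ] {κ : Type*} [Fintype κ] [DecidableEq κ]

theorem sum_entryMoment_filter_apply_eq_le (c : κ → ι) {j₀ j₁ : κ} (h : j₀ ≠ j₁) :
    ∑ i : κ → ι with i j₀ = i j₁, entryMoment μ i c ≤ 2 / (N + 1) := by
  have hN : 0 < N := Nat.cast_pos.mpr (Fintype.card_pos_iff.mpr ⟨c j₀⟩)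
  calc ∑ i : κ → ι with i j₀ = i j₁, entryMoment μ i c
      = ∫ U, ∑ i : κ → ι with i j₀ = i j₁, ∏ j, entrySq U (i j) (c j) ∂μ :=
        (integral_finsetSum _ fun i _ => integrable_of_continuous μ (by fun_prop)).symm
    _ = ∑ r, ∫ U, entrySq U r (c j₀) * entrySq U r (c j₁) ∂μ := by
        simp_rw [sum_prod_filter_apply_eq (fun j r => entrySq _ r (c j))
          (fun j => sum_entrySq _ _) h]
        exact integral_finsetSum _ fun r _ => integrable_of_continuous μ (by fun_prop)
    _ ≤ ∑ _r : ι, 2 / (N * (N + 1)) :=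
        sum_le_sum fun r _ => integral_entrySq_mul_entrySq_le μ r _ _
    _ = 2 / (N + 1) := by
        rw [sum_const, card_univ, nsmul_eq_mul]
        field_simp

theorem sum_entryMoment_filter_not_injective_le (c : κ → ι) :
    ∑ i : κ → ι with ¬Injective i, entryMoment μ i c ≤ Fintype.card κ ^ 2 * (2 / (N + 1)) :=
  calc ∑ i : κ → ι with ¬Injective i, entryMoment μ i c
      ≤ ∑ p ∈ (univ : Finset κ).offDiag, ∑ i : κ → ι with i p.1 = i p.2, entryMoment μ i c :=
        sum_filter_not_injective_le (entryMoment_nonneg μ · c)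
    _ ≤ ∑ _p ∈ (univ : Finset κ).offDiag, 2 / (N + 1) :=
        sum_le_sum fun p hp => sum_entryMoment_filter_apply_eq_le μ c (mem_offDiag.mp hp).2.2
    _ ≤ Fintype.card κ ^ 2 * (2 / (N + 1)) := by
        rw [sum_const, nsmul_eq_mul]
        gcongr
        rw [offDiag_card, card_univ, ← sq]
        exact_mod_cast Nat.sub_le _ _

theorem descFactorial_mul_entryMoment_mem_Icc {i : κ → ι} (hi : Injective i) (c : κ → ι) :
    ((Fintype.card ι).descFactorial (Fintype.card κ) : ℝ) * entryMoment μ i c ∈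
      Set.Icc (1 - Fintype.card κ ^ 2 * (2 / (N + 1))) 1 := by
  have hinj : ∑ i' : κ → ι with Injective i', entryMoment μ i' c =
      (Fintype.card ι).descFactorial (Fintype.card κ) * entryMoment μ i c := by
    rw [sum_congr rfl fun i' hi' => entryMoment_eq_of_injective μ (mem_filter.mp hi').2 hi c,
      sum_const, card_filter_injective, nsmul_eq_mul]
  have htotal := sum_filter_add_sum_filter_not univ (fun i' : κ → ι => Injective i')
    (entryMoment μ · c)
  rw [sum_entryMoment, hinj] at htotal
  have hnoninj := sum_entryMoment_filter_not_injective_le μ c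
  have hnonneg : 0 ≤ ∑ i' : κ → ι with ¬Injective i', entryMoment μ i' c :=
    sum_nonneg fun i' _ => entryMoment_nonneg μ i' c
  constructor <;> linarith

end Invariant

end UnitaryHaar

open UnitaryHaar Asymptotics

theorem stmt13_general (μ : ∀ n : ℕ, Measure ↥(Matrix.unitaryGroup (Fin n) ℂ))
    (hprob : ∀ n, IsProbabilityMeasure (μ n))
    (hinv : ∀ n (V : ↥(Matrix.unitaryGroup (Fin n) ℂ)),
      Measure.map (fun U => V * U) (μ n) = μ n)
    (k : ℕ) :
    Tendsto
      (fun n : ℕ => ((n + k : ℕ) : ℝ) ^ k *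
        ∫ U : ↥(Matrix.unitaryGroup (Fin (n + k)) ℂ),
          ∏ i : Fin k,
            ‖(U : Matrix (Fin (n + k)) (Fin (n + k)) ℂ)
                (Fin.castLE (Nat.le_add_left k n) i)
                (Fin.castLE (Nat.le_add_left k n) i)‖ ^ 2 ∂(μ (n + k)))
      atTop (nhds 1) := by
  let A n := entryMoment (μ (n + k)) (Fin.castLE (Nat.le_add_left k n))
    (Fin.castLE (Nat.le_add_left k n))
  have hbounds : ∀ n, ((n + k).descFactorial k : ℝ) * A n ∈
      Set.Icc (1 - (k : ℝ) ^ 2 * (2 / (((n + k : ℕ) : ℝ) + 1))) 1 := fun n => by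
    have := hprob (n + k)
    have : (μ (n + k)).IsMulLeftInvariant := ⟨hinv (n + k)⟩
    simpa only [Fintype.card_fin] using descFactorial_mul_entryMoment_mem_Icc (μ (n + k))
      (Fin.castLE_injective (Nat.le_add_left k n)) (Fin.castLE (Nat.le_add_left k n))
  have hlower : Tendsto (fun n : ℕ => 1 - (k : ℝ) ^ 2 * (2 / (((n + k : ℕ) : ℝ) + 1))) atTop
      (nhds 1) := by
    have hden : Tendsto (fun n : ℕ => ((n + k : ℕ) : ℝ) + 1) atTop atTop :=
      tendsto_atTop_add_const_right _ _
        (tendsto_natCast_atTop_atTop.comp (tendsto_add_atTop_nat k))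
    simpa using tendsto_const_nhds.sub (tendsto_const_nhds.mul (tendsto_const_nhds.div_atTop hden))
  have hdesc : Tendsto (fun n => ((n + k).descFactorial k : ℝ) * A n) atTop (nhds 1) :=
    tendsto_of_tendsto_of_tendsto_of_le_of_le hlower tendsto_const_nhds
      (fun n => (hbounds n).1) (fun n => (hbounds n).2)
  have hequiv : (fun n => ((n + k).descFactorial k : ℝ)) ~[atTop] fun n => ((n + k : ℕ) : ℝ) ^ k :=
    (isEquivalent_descFactorial k).comp_tendsto (tendsto_add_atTop_nat k)
  exact (hequiv.mul IsEquivalent.refl).tendsto_nhds hdesc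

/-- For Haar unitary random matrices (the Haar measure `μ n` being the left-invariant Borel
probability measure on the `n × n` unitary group) and a fixed positive integer `k`,
`n^k · M_k^n = n^k · E(|U₁₁|² ⋯ |U_kk|²) → 1` as `n → ∞` (the matrix size `n + k` tends to
infinity with the diagonal entries indexed by the first `k` coordinates). -/
theorem stmt13 (μ : ∀ n : ℕ, Measure ↥(Matrix.unitaryGroup (Fin n) ℂ))
    (hprob : ∀ n, IsProbabilityMeasure (μ n))
    (hinv : ∀ n (V : ↥(Matrix.unitaryGroup (Fin n) ℂ)),
      Measure.map (fun U => V * U) (μ n) = μ n)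
    (k : ℕ) (hk : 0 < k) :
    Tendsto
      (fun n : ℕ => ((n + k : ℕ) : ℝ) ^ k *
        ∫ U : ↥(Matrix.unitaryGroup (Fin (n + k)) ℂ),
          ∏ i : Fin k,
            ‖(U : Matrix (Fin (n + k)) (Fin (n + k)) ℂ)
                (Fin.castLE (Nat.le_add_left k n) i)
                (Fin.castLE (Nat.le_add_left k n) i)‖ ^ 2 ∂(μ (n + k)))
      atTop (nhds 1) :=
  stmt13_general μ hprob hinv k
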